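/- Let φ: S → T be a premorphism between restriction semigroups. Then: (1) φ satisfies (Sr) (φ(s)φ(t) = φ(st)φ(t)^* for all s, t) if and only if φ satisfies (LSr) (φ(s t^+)φ(t) = φ(st)φ(t)^* for all s, t) and (OP) (s ≤ t implies φ(s) ≤ φ(t)); (2) φ satisfies (Sl) (φ(s)φ(t) = φ(s)^+ φ(st) for all s, t) if and only if φ satisfies (LSl) (φ(s)φ(s^* t) = φ(s)^+ φ(st) for all s, t) and (OP). Consequently, φ is strong if and only if it is locally strong and order-preserving. -/

import Mathlib

/-- A (two-sided) restriction semigroup: a semigroup with unary operations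
`rstar` (`x ↦ x^*`) and `rplus` (`x ↦ x^+`) satisfying the standard identities. -/
class RestrictionSemigroup (S : Type*) extends Semigroup S where
  rstar : S → S
  rplus : S → S
  rplus_mul_self : ∀ x : S, rplus x * x = x
  rplus_comm : ∀ x y : S, rplus x * rplus y = rplus y * rplus x
  rplus_rplus_mul : ∀ x y : S, rplus (rplus x * y) = rplus x * rplus y
  mul_rplus : ∀ x y : S, rplus (x * y) * x = x * rplus y
  mul_rstar_self : ∀ x : S, x * rstar x = x
  rstar_comm : ∀ x y : S, rstar x * rstar y = rstar y * rstar x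
  rstar_mul_rstar : ∀ x y : S, rstar (x * rstar y) = rstar x * rstar y
  rstar_mul : ∀ x y : S, y * rstar (x * y) = rstar x * y
  rstar_rplus : ∀ x : S, rstar (rplus x) = rplus x
  rplus_rstar : ∀ x : S, rplus (rstar x) = rstar x

open RestrictionSemigroup

/-- `e` is a projection: `e ∈ P(S) = {s^* : s ∈ S}`. -/
def IsProj {S : Type*} [RestrictionSemigroup S] (e : S) : Prop :=
  ∃ s : S, rstar s = e

/-- The natural partial order: `s ≤ t` iff `s = t f` for some projection `f`. -/
def rle {S : Type*} [RestrictionSemigroup S] (s t : S) : Prop :=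
  ∃ f : S, IsProj f ∧ s = t * f

/-- Compatibility: `s ∼ t` iff `s t^* = t s^*` and `t^+ s = s^+ t`. -/
def compat {S : Type*} [RestrictionSemigroup S] (s t : S) : Prop :=
  s * rstar t = t * rstar s ∧ rplus t * s = rplus s * t

/-! In a restriction semigroup `s ≤ t` can be read both as `s = t s^*` and as `s = s^+ t`, and the
order is compatible with multiplication on either side. Given (Sr), order preservation follows from
`φ(s) = φ(s) φ(s^*)^* φ(s)^* = φ(t) φ(s^*) φ(s)^* = φ(t) φ(s)^*` for `s = t s^*`. Conversely, (LSr)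
with (PM1) and (PM3) gives `φ(s)φ(t) = φ(s)φ(t)^+φ(t) ≤ φ(s t^+)φ(t) = φ(st)φ(t)^*`, while (OP)
applied to `s t^+ ≤ s` gives the reverse inequality. The left-hand statement is dual. -/

section NaturalOrder

variable {S : Type*} [RestrictionSemigroup S]

local infix:50 " ≼ " => rle

lemma rstar_rstar (x : S) : rstar (rstar x) = rstar x := by
  rw [← rplus_rstar x, rstar_rplus]

lemma rplus_rplus (x : S) : rplus (rplus x) = rplus x := by
  rw [← rstar_rplus x, rplus_rstar]

lemma isProj_rstar (x : S) : IsProj (rstar x) := ⟨x, rfl⟩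

lemma isProj_rplus (x : S) : IsProj (rplus x) := ⟨rplus x, rstar_rplus x⟩

lemma IsProj.mul {e f : S} (he : IsProj e) (hf : IsProj f) : IsProj (e * f) := by
  obtain ⟨a, rfl⟩ := he
  obtain ⟨b, rfl⟩ := hf
  exact ⟨a * rstar b, rstar_mul_rstar a b⟩

lemma IsProj.mul_comm_rstar {e : S} (he : IsProj e) (x : S) : e * x = x * rstar (e * x) := by
  obtain ⟨g, rfl⟩ := he
  rw [rstar_mul, rstar_rstar]

lemma rle.eq_mul_rstar {s t : S} (h : s ≼ t) : s = t * rstar s := by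
  obtain ⟨f, ⟨g, rfl⟩, rfl⟩ := h
  rw [rstar_mul_rstar, ← mul_assoc, mul_rstar_self]

lemma rle.eq_rplus_mul {s t : S} (h : s ≼ t) : s = rplus s * t := by
  obtain ⟨f, ⟨g, rfl⟩, rfl⟩ := h
  rw [mul_rplus, rplus_rstar]

lemma rle_of_eq_mul_left {s t e : S} (he : IsProj e) (h : s = e * t) : s ≼ t :=
  ⟨rstar s, isProj_rstar s, by rw [h]; exact he.mul_comm_rstar t⟩

lemma rle_trans {a b c : S} (hab : a ≼ b) (hbc : b ≼ c) : a ≼ c := by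
  obtain ⟨f, hf, rfl⟩ := hab
  obtain ⟨g, hg, rfl⟩ := hbc
  exact ⟨g * f, hg.mul hf, mul_assoc _ _ _⟩

instance : @Trans S S S rle rle rle := ⟨rle_trans⟩

lemma rle_antisymm {a b : S} (hab : a ≼ b) (hba : b ≼ a) : a = b :=
  calc a = b * rstar a := hab.eq_mul_rstar
    _ = a * rstar b * rstar a := by rw [← hba.eq_mul_rstar]
    _ = a * rstar a * rstar b := by rw [mul_assoc, rstar_comm, ← mul_assoc]
    _ = b := by rw [mul_rstar_self, ← hba.eq_mul_rstar]

lemma rle.mul_left {a b : S} (h : a ≼ b) (c : S) : c * a ≼ c * b := by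
  obtain ⟨f, hf, rfl⟩ := h
  exact ⟨f, hf, (mul_assoc _ _ _).symm⟩

lemma rle.mul_right {a b : S} (h : a ≼ b) (c : S) : a * c ≼ b * c := by
  obtain ⟨f, hf, rfl⟩ := h
  exact ⟨rstar (f * c), isProj_rstar _, by rw [mul_assoc, mul_assoc, ← hf.mul_comm_rstar]⟩

end NaturalOrder

section Premorphism

variable {S T : Type*} [RestrictionSemigroup S] [RestrictionSemigroup T]

local infix:50 " ≼ " => rle

def RightStrong (φ : S → T) : Prop :=
  ∀ s t : S, φ s * φ t = φ (s * t) * rstar (φ t)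

def LeftStrong (φ : S → T) : Prop :=
  ∀ s t : S, φ s * φ t = rplus (φ s) * φ (s * t)

def LocallyRightStrong (φ : S → T) : Prop :=
  ∀ s t : S, φ (s * rplus t) * φ t = φ (s * t) * rstar (φ t)

def LocallyLeftStrong (φ : S → T) : Prop :=
  ∀ s t : S, φ s * φ (rstar s * t) = rplus (φ s) * φ (s * t)

def OrderPreserving (φ : S → T) : Prop :=
  ∀ s t : S, s ≼ t → φ s ≼ φ t

variable {φ : S → T}

lemma RightStrong.locallyRightStrong (hφ : RightStrong φ) : LocallyRightStrong φ := by
  intro s t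
  rw [hφ, mul_assoc, rplus_mul_self]

lemma LeftStrong.locallyLeftStrong (hφ : LeftStrong φ) : LocallyLeftStrong φ := by
  intro s t
  rw [hφ, ← mul_assoc, mul_rstar_self]

lemma RightStrong.orderPreserving (hPM2 : ∀ s : S, rstar (φ s) ≼ φ (rstar s))
    (hφ : RightStrong φ) : OrderPreserving φ := by
  intro s t hst
  have hproj : rstar (φ s) = φ (rstar s) * rstar (φ s) := by
    simpa only [rstar_rstar] using (hPM2 s).eq_mul_rstar
  have hproj' : rstar (φ s) = rstar (φ (rstar s)) * rstar (φ s) := by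
    rw [← rstar_mul_rstar, ← hproj, rstar_rstar]
  refine ⟨rstar (φ s), isProj_rstar _, ?_⟩
  calc φ s = φ s * rstar (φ s) := (mul_rstar_self _).symm
    _ = φ (t * rstar s) * rstar (φ (rstar s)) * rstar (φ s) := by
      rw [← hst.eq_mul_rstar, mul_assoc, ← hproj']
    _ = φ t * rstar (φ s) := by rw [← hφ, mul_assoc, ← hproj]

lemma LeftStrong.orderPreserving (hPM3 : ∀ s : S, rplus (φ s) ≼ φ (rplus s))
    (hφ : LeftStrong φ) : OrderPreserving φ := by
  intro s t hst
  have hproj : rplus (φ s) = rplus (φ s) * φ (rplus s) := by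
    simpa only [rplus_rplus] using (hPM3 s).eq_rplus_mul
  have hproj' : rplus (φ s) = rplus (φ s) * rplus (φ (rplus s)) := by
    rw [← rplus_rplus_mul, ← hproj, rplus_rplus]
  refine rle_of_eq_mul_left (isProj_rplus (φ s)) ?_
  calc φ s = rplus (φ s) * φ s := (rplus_mul_self _).symm
    _ = rplus (φ s) * (rplus (φ (rplus s)) * φ (rplus s * t)) := by
      rw [← hst.eq_rplus_mul, ← mul_assoc, ← hproj']
    _ = rplus (φ s) * φ t := by rw [← hφ, ← mul_assoc, ← hproj]

lemma LocallyRightStrong.rightStrong (hPM1 : ∀ s t : S, φ s * φ t ≼ φ (s * t))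
    (hPM3 : ∀ s : S, rplus (φ s) ≼ φ (rplus s)) (hφ : LocallyRightStrong φ)
    (hOP : OrderPreserving φ) : RightStrong φ := by
  intro s t
  apply rle_antisymm
  · calc φ s * φ t = φ s * (rplus (φ t) * φ t) := by rw [rplus_mul_self]
      _ ≼ φ s * (φ (rplus t) * φ t) := ((hPM3 t).mul_right _).mul_left _
      _ ≼ φ (s * rplus t) * φ t := by rw [← mul_assoc]; exact (hPM1 s (rplus t)).mul_right _
      _ = φ (s * t) * rstar (φ t) := hφ s t
  · rw [← hφ]
    exact (hOP _ _ ⟨rplus t, isProj_rplus t, rfl⟩).mul_right _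

lemma LocallyLeftStrong.leftStrong (hPM1 : ∀ s t : S, φ s * φ t ≼ φ (s * t))
    (hPM2 : ∀ s : S, rstar (φ s) ≼ φ (rstar s)) (hφ : LocallyLeftStrong φ)
    (hOP : OrderPreserving φ) : LeftStrong φ := by
  intro s t
  apply rle_antisymm
  · calc φ s * φ t = φ s * rstar (φ s) * φ t := by rw [mul_rstar_self]
      _ ≼ φ s * φ (rstar s) * φ t := ((hPM2 s).mul_left _).mul_right _
      _ ≼ φ s * φ (rstar s * t) := by rw [mul_assoc]; exact (hPM1 (rstar s) t).mul_left _
      _ = rplus (φ s) * φ (s * t) := hφ s t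
  · rw [← hφ]
    exact (hOP _ _ (rle_of_eq_mul_left (isProj_rstar s) rfl)).mul_left _

lemma rightStrong_iff (hPM1 : ∀ s t : S, φ s * φ t ≼ φ (s * t))
    (hPM2 : ∀ s : S, rstar (φ s) ≼ φ (rstar s)) (hPM3 : ∀ s : S, rplus (φ s) ≼ φ (rplus s)) :
    RightStrong φ ↔ LocallyRightStrong φ ∧ OrderPreserving φ :=
  ⟨fun h => ⟨h.locallyRightStrong, h.orderPreserving hPM2⟩,
    fun h => h.1.rightStrong hPM1 hPM3 h.2⟩

lemma leftStrong_iff (hPM1 : ∀ s t : S, φ s * φ t ≼ φ (s * t))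
    (hPM2 : ∀ s : S, rstar (φ s) ≼ φ (rstar s)) (hPM3 : ∀ s : S, rplus (φ s) ≼ φ (rplus s)) :
    LeftStrong φ ↔ LocallyLeftStrong φ ∧ OrderPreserving φ :=
  ⟨fun h => ⟨h.locallyLeftStrong, h.orderPreserving hPM3⟩,
    fun h => h.1.leftStrong hPM1 hPM2 h.2⟩

end Premorphism

theorem stmt12 {S T : Type*} [RestrictionSemigroup S] [RestrictionSemigroup T]
    (φ : S → T)
    (hPM1 : ∀ s t : S, rle (φ s * φ t) (φ (s * t)))
    (hPM2 : ∀ s : S, rle (rstar (φ s)) (φ (rstar s)))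
    (hPM3 : ∀ s : S, rle (rplus (φ s)) (φ (rplus s))) :
    ((∀ s t : S, φ s * φ t = φ (s * t) * rstar (φ t)) ↔
      ((∀ s t : S, φ (s * rplus t) * φ t = φ (s * t) * rstar (φ t)) ∧
        (∀ s t : S, rle s t → rle (φ s) (φ t)))) ∧
    ((∀ s t : S, φ s * φ t = rplus (φ s) * φ (s * t)) ↔
      ((∀ s t : S, φ s * φ (rstar s * t) = rplus (φ s) * φ (s * t)) ∧
        (∀ s t : S, rle s t → rle (φ s) (φ t)))) ∧
    (((∀ s t : S, φ s * φ t = φ (s * t) * rstar (φ t)) ∧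
        (∀ s t : S, φ s * φ t = rplus (φ s) * φ (s * t))) ↔
      ((∀ s t : S, φ (s * rplus t) * φ t = φ (s * t) * rstar (φ t)) ∧
        (∀ s t : S, φ s * φ (rstar s * t) = rplus (φ s) * φ (s * t)) ∧
        (∀ s t : S, rle s t → rle (φ s) (φ t)))) := by
  have hright := rightStrong_iff hPM1 hPM2 hPM3
  have hleft := leftStrong_iff hPM1 hPM2 hPM3
  refine ⟨hright, hleft, ?_⟩
  change RightStrong φ ∧ LeftStrong φ ↔ LocallyRightStrong φ ∧ LocallyLeftStrong φ ∧ _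
  rw [hright, hleft]
  tauto
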